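/- Under the stated setup with two distinct real eigenvalues, for every h ∈ ℕ the cross-covariation at negative lag satisfies the exact identity CV⁻(h) = D₁·λ₁ʰ + D₂·λ₂ʰ. In particular, CV⁻(h) is asymptotically D₁λ₁ʰ if |λ₁| > |λ₂|, asymptotically D₂λ₂ʰ if |λ₁| < |λ₂|, and equals (D₁+D₂)λ₁ʰ for even h and (D₁−D₂)λ₁ʰ for odd h when λ₂ = −λ₁. -/

import Mathlib

open MeasureTheory Filter Topology

/-- The signed power `x^⟨p⟩ = |x|^p · sign x`. -/
noncomputable def spow (x p : ℝ) : ℝ := |x| ^ p * Real.sign x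

/-- The unit sphere `S₂ ⊆ ℝ²`. -/
abbrev Sphere2 : Type := {s : ℝ × ℝ // s.1 ^ 2 + s.2 ^ 2 = 1}

noncomputable def A1 (a1 a2 a3 a4 l1 l2 : ℝ) (j : ℕ) (s : Sphere2) : ℝ :=
  (l2 * l1 ^ j * s.1.1 - l1 ^ j * a1 * s.1.1 - l1 ^ j * a2 * s.1.2) / (l2 - l1)

noncomputable def B1 (a1 a2 a3 a4 l1 l2 : ℝ) (j : ℕ) (s : Sphere2) : ℝ :=
  (-(l1 * l2 ^ j * s.1.1) + l2 ^ j * a1 * s.1.1 + l2 ^ j * a2 * s.1.2) / (l2 - l1)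

noncomputable def C1 (a1 a2 a3 a4 l1 l2 : ℝ) (j : ℕ) (s : Sphere2) : ℝ :=
  (l1 ^ j * (-(a3 * s.1.1) + l2 * s.1.2 - a4 * s.1.2)
    + l2 ^ j * (a3 * s.1.1 - l1 * s.1.2 + a4 * s.1.2)) / (l2 - l1)

/-- The cross-codifference `CD(X₁(t), X₂(t-h))` of the bidimensional α-stable AR(1) model. -/
noncomputable def CDneg (Γ : Measure Sphere2) (α a1 a2 a3 a4 l1 l2 : ℝ) (h : ℕ) : ℝ :=
  ∑' j : ℕ, ∫ s,
    (|l1 ^ h * A1 a1 a2 a3 a4 l1 l2 j s + l2 ^ h * B1 a1 a2 a3 a4 l1 l2 j s| ^ α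
      + |C1 a1 a2 a3 a4 l1 l2 j s| ^ α
      - |C1 a1 a2 a3 a4 l1 l2 j s - (l1 ^ h * A1 a1 a2 a3 a4 l1 l2 j s + l2 ^ h * B1 a1 a2 a3 a4 l1 l2 j s)| ^ α) ∂Γ

/-- The cross-covariation `CV(X₁(t), X₂(t-h))` of the bidimensional α-stable AR(1) model. -/
noncomputable def CVneg (Γ : Measure Sphere2) (α a1 a2 a3 a4 l1 l2 : ℝ) (h : ℕ) : ℝ :=
  ∑' j : ℕ, ∫ s,
    spow (C1 a1 a2 a3 a4 l1 l2 j s) (α - 1) * (l1 ^ h * A1 a1 a2 a3 a4 l1 l2 j s + l2 ^ h * B1 a1 a2 a3 a4 l1 l2 j s) ∂Γ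

noncomputable def D1 (Γ : Measure Sphere2) (α a1 a2 a3 a4 l1 l2 : ℝ) : ℝ :=
  ∑' j : ℕ, ∫ s, A1 a1 a2 a3 a4 l1 l2 j s * spow (C1 a1 a2 a3 a4 l1 l2 j s) (α - 1) ∂Γ

noncomputable def D2 (Γ : Measure Sphere2) (α a1 a2 a3 a4 l1 l2 : ℝ) : ℝ :=
  ∑' j : ℕ, ∫ s, B1 a1 a2 a3 a4 l1 l2 j s * spow (C1 a1 a2 a3 a4 l1 l2 j s) (α - 1) ∂Γ


instance : BorelSpace Sphere2 :=
  Subtype.borelSpace {s : ℝ × ℝ | s.1 ^ 2 + s.2 ^ 2 = 1}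

lemma measurable_realSign : Measurable Real.sign := by
  unfold Real.sign
  exact measurable_const.ite (measurableSet_lt measurable_id measurable_const)
    (measurable_const.ite (measurableSet_lt measurable_const measurable_id) measurable_const)

lemma abs_spow_le (x p : ℝ) : |spow x p| ≤ |x| ^ p := by
  have h1 : |Real.sign x| ≤ 1 := by
    rcases lt_trichotomy x 0 with h | h | h
    · simp [Real.sign_of_neg h]
    · simp [h]
    · simp [Real.sign_of_pos h]
  have h0 : (0:ℝ) ≤ |x| ^ p := Real.rpow_nonneg (abs_nonneg x) p
  calc |spow x p| = |x| ^ p * |Real.sign x| := by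
        rw [spow, abs_mul, abs_of_nonneg h0]
    _ ≤ |x| ^ p * 1 := by gcongr
    _ = |x| ^ p := mul_one _

lemma sphere_abs_fst (s : Sphere2) : |s.1.1| ≤ 1 := by
  nlinarith [s.2, sq_abs s.1.1, sq_nonneg s.1.2, abs_nonneg s.1.1]

lemma sphere_abs_snd (s : Sphere2) : |s.1.2| ≤ 1 := by
  nlinarith [s.2, sq_abs s.1.2, sq_nonneg s.1.1, abs_nonneg s.1.2]

theorem CV_neg_exact_and_asymptotics
    (Γ : Measure Sphere2) [IsFiniteMeasure Γ]
    (α a1 a2 a3 a4 l1 l2 : ℝ) (hα1 : 1 < α) (hα2 : α < 2)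
    (hl1 : l1 ^ 2 - (a1 + a4) * l1 + (a1 * a4 - a2 * a3) = 0)
    (hl2 : l2 ^ 2 - (a1 + a4) * l2 + (a1 * a4 - a2 * a3) = 0)
    (hne : l1 ≠ l2) (habs1 : |l1| < 1) (habs2 : |l2| < 1) :
    (∀ h : ℕ, CVneg Γ α a1 a2 a3 a4 l1 l2 h = D1 Γ α a1 a2 a3 a4 l1 l2 * l1 ^ h + D2 Γ α a1 a2 a3 a4 l1 l2 * l2 ^ h) ∧
    (|l2| < |l1| →
      Tendsto (fun h : ℕ => CVneg Γ α a1 a2 a3 a4 l1 l2 h / l1 ^ h) atTop (𝓝 (D1 Γ α a1 a2 a3 a4 l1 l2))) ∧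
    (|l1| < |l2| →
      Tendsto (fun h : ℕ => CVneg Γ α a1 a2 a3 a4 l1 l2 h / l2 ^ h) atTop (𝓝 (D2 Γ α a1 a2 a3 a4 l1 l2))) ∧
    (l2 = -l1 → ∀ h : ℕ,
      (Even h → CVneg Γ α a1 a2 a3 a4 l1 l2 h = (D1 Γ α a1 a2 a3 a4 l1 l2 + D2 Γ α a1 a2 a3 a4 l1 l2) * l1 ^ h) ∧
      (Odd h → CVneg Γ α a1 a2 a3 a4 l1 l2 h = (D1 Γ α a1 a2 a3 a4 l1 l2 - D2 Γ α a1 a2 a3 a4 l1 l2) * l1 ^ h)) := by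

  set p := α - 1 with hp_def
  have hp : 0 ≤ p := by rw [hp_def]; linarith
  have hden : (0:ℝ) < |l2 - l1| := by
    rw [abs_pos, sub_ne_zero]; exact fun h => hne h.symm
  set KA := (|l2| + |a1| + |a2|) / |l2 - l1| with hKA_def
  set KB := (|l1| + |a1| + |a2|) / |l2 - l1| with hKB_def
  set KC := (|a3| + |l2| + |a4| + (|a3| + |l1| + |a4|)) / |l2 - l1| with hKC_def
  have hKAnn : 0 ≤ KA := div_nonneg (by positivity) hden.le
  have hKBnn : 0 ≤ KB := div_nonneg (by positivity) hden.le
  have hKCnn : 0 ≤ KC := div_nonneg (by positivity) hden.le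
  -- pointwise bounds
  have hA : ∀ (j : ℕ) (s : Sphere2), |A1 a1 a2 a3 a4 l1 l2 j s| ≤ KA * |l1| ^ j := by
    intro j s
    have h1 : A1 a1 a2 a3 a4 l1 l2 j s = l1 ^ j * ((l2 - a1) * s.1.1 - a2 * s.1.2) / (l2 - l1) := by
      unfold A1; ring
    have h2 : |(l2 - a1) * s.1.1 - a2 * s.1.2| ≤ |l2| + |a1| + |a2| := by
      have e1 : |(l2 - a1) * s.1.1| ≤ |l2 - a1| := by
        rw [abs_mul]; exact mul_le_of_le_one_right (abs_nonneg _) (sphere_abs_fst s)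
      have e2 : |a2 * s.1.2| ≤ |a2| := by
        rw [abs_mul]; exact mul_le_of_le_one_right (abs_nonneg _) (sphere_abs_snd s)
      have e3 : |l2 - a1| ≤ |l2| + |a1| := abs_sub _ _
      calc |(l2 - a1) * s.1.1 - a2 * s.1.2| ≤ |(l2 - a1) * s.1.1| + |a2 * s.1.2| := abs_sub _ _
        _ ≤ |l2| + |a1| + |a2| := by linarith
    rw [h1, abs_div, abs_mul, abs_pow]
    calc |l1| ^ j * |(l2 - a1) * s.1.1 - a2 * s.1.2| / |l2 - l1|
        ≤ |l1| ^ j * (|l2| + |a1| + |a2|) / |l2 - l1| := by gcongr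
      _ = KA * |l1| ^ j := by rw [hKA_def]; ring
  have hB : ∀ (j : ℕ) (s : Sphere2), |B1 a1 a2 a3 a4 l1 l2 j s| ≤ KB * |l2| ^ j := by
    intro j s
    have h1 : B1 a1 a2 a3 a4 l1 l2 j s = l2 ^ j * ((a1 - l1) * s.1.1 + a2 * s.1.2) / (l2 - l1) := by
      unfold B1; ring
    have h2 : |(a1 - l1) * s.1.1 + a2 * s.1.2| ≤ |l1| + |a1| + |a2| := by
      have e1 : |(a1 - l1) * s.1.1| ≤ |a1 - l1| := by
        rw [abs_mul]; exact mul_le_of_le_one_right (abs_nonneg _) (sphere_abs_fst s)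
      have e2 : |a2 * s.1.2| ≤ |a2| := by
        rw [abs_mul]; exact mul_le_of_le_one_right (abs_nonneg _) (sphere_abs_snd s)
      have e3 : |a1 - l1| ≤ |a1| + |l1| := abs_sub _ _
      calc |(a1 - l1) * s.1.1 + a2 * s.1.2| ≤ |(a1 - l1) * s.1.1| + |a2 * s.1.2| := abs_add_le _ _
        _ ≤ |l1| + |a1| + |a2| := by linarith
    rw [h1, abs_div, abs_mul, abs_pow]
    calc |l2| ^ j * |(a1 - l1) * s.1.1 + a2 * s.1.2| / |l2 - l1|
        ≤ |l2| ^ j * (|l1| + |a1| + |a2|) / |l2 - l1| := by gcongr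
      _ = KB * |l2| ^ j := by rw [hKB_def]; ring
  have hC : ∀ (j : ℕ) (s : Sphere2), |C1 a1 a2 a3 a4 l1 l2 j s| ≤ KC := by
    intro j s
    have p1 : |l1 ^ j * (-(a3 * s.1.1) + l2 * s.1.2 - a4 * s.1.2)| ≤ |a3| + |l2| + |a4| := by
      have e0 : |l1 ^ j| ≤ 1 := by
        rw [abs_pow]; exact pow_le_one₀ (abs_nonneg _) habs1.le
      have e1 : |-(a3 * s.1.1) + l2 * s.1.2 - a4 * s.1.2| ≤ |a3| + |l2| + |a4| := by
        have f1 : |a3 * s.1.1| ≤ |a3| := by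
          rw [abs_mul]; exact mul_le_of_le_one_right (abs_nonneg _) (sphere_abs_fst s)
        have f2 : |l2 * s.1.2| ≤ |l2| := by
          rw [abs_mul]; exact mul_le_of_le_one_right (abs_nonneg _) (sphere_abs_snd s)
        have f3 : |a4 * s.1.2| ≤ |a4| := by
          rw [abs_mul]; exact mul_le_of_le_one_right (abs_nonneg _) (sphere_abs_snd s)
        calc |-(a3 * s.1.1) + l2 * s.1.2 - a4 * s.1.2|
            ≤ |-(a3 * s.1.1) + l2 * s.1.2| + |a4 * s.1.2| := abs_sub _ _
          _ ≤ |-(a3 * s.1.1)| + |l2 * s.1.2| + |a4 * s.1.2| := by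
              have := abs_add_le (-(a3 * s.1.1)) (l2 * s.1.2); linarith
          _ ≤ |a3| + |l2| + |a4| := by rw [abs_neg]; linarith
      rw [abs_mul]
      calc |l1 ^ j| * |-(a3 * s.1.1) + l2 * s.1.2 - a4 * s.1.2|
          ≤ 1 * (|a3| + |l2| + |a4|) := mul_le_mul e0 e1 (abs_nonneg _) zero_le_one
        _ = |a3| + |l2| + |a4| := one_mul _
    have p2 : |l2 ^ j * (a3 * s.1.1 - l1 * s.1.2 + a4 * s.1.2)| ≤ |a3| + |l1| + |a4| := by
      have e0 : |l2 ^ j| ≤ 1 := by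
        rw [abs_pow]; exact pow_le_one₀ (abs_nonneg _) habs2.le
      have e1 : |a3 * s.1.1 - l1 * s.1.2 + a4 * s.1.2| ≤ |a3| + |l1| + |a4| := by
        have f1 : |a3 * s.1.1| ≤ |a3| := by
          rw [abs_mul]; exact mul_le_of_le_one_right (abs_nonneg _) (sphere_abs_fst s)
        have f2 : |l1 * s.1.2| ≤ |l1| := by
          rw [abs_mul]; exact mul_le_of_le_one_right (abs_nonneg _) (sphere_abs_snd s)
        have f3 : |a4 * s.1.2| ≤ |a4| := by
          rw [abs_mul]; exact mul_le_of_le_one_right (abs_nonneg _) (sphere_abs_snd s)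
        calc |a3 * s.1.1 - l1 * s.1.2 + a4 * s.1.2|
            ≤ |a3 * s.1.1 - l1 * s.1.2| + |a4 * s.1.2| := abs_add_le _ _
          _ ≤ |a3 * s.1.1| + |l1 * s.1.2| + |a4 * s.1.2| := by
              have := abs_sub (a3 * s.1.1) (l1 * s.1.2); linarith
          _ ≤ |a3| + |l1| + |a4| := by linarith
      rw [abs_mul]
      calc |l2 ^ j| * |a3 * s.1.1 - l1 * s.1.2 + a4 * s.1.2|
          ≤ 1 * (|a3| + |l1| + |a4|) := mul_le_mul e0 e1 (abs_nonneg _) zero_le_one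
        _ = |a3| + |l1| + |a4| := one_mul _
    unfold C1
    rw [abs_div]
    rw [hKC_def]
    gcongr ?_ / _
    calc |l1 ^ j * (-(a3 * s.1.1) + l2 * s.1.2 - a4 * s.1.2)
          + l2 ^ j * (a3 * s.1.1 - l1 * s.1.2 + a4 * s.1.2)|
        ≤ |l1 ^ j * (-(a3 * s.1.1) + l2 * s.1.2 - a4 * s.1.2)|
          + |l2 ^ j * (a3 * s.1.1 - l1 * s.1.2 + a4 * s.1.2)| := abs_add_le _ _
      _ ≤ |a3| + |l2| + |a4| + (|a3| + |l1| + |a4|) := by linarith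
  have hS : ∀ (j : ℕ) (s : Sphere2), |spow (C1 a1 a2 a3 a4 l1 l2 j s) p| ≤ KC ^ p := by
    intro j s
    exact (abs_spow_le _ _).trans (Real.rpow_le_rpow (abs_nonneg _) (hC j s) hp)
  -- measurability
  have hmA : ∀ j : ℕ, Measurable (fun s : Sphere2 => A1 a1 a2 a3 a4 l1 l2 j s) := by
    intro j; unfold A1; exact Continuous.measurable (by fun_prop)
  have hmB : ∀ j : ℕ, Measurable (fun s : Sphere2 => B1 a1 a2 a3 a4 l1 l2 j s) := by
    intro j; unfold B1; exact Continuous.measurable (by fun_prop)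
  have hmC : ∀ j : ℕ, Measurable (fun s : Sphere2 => C1 a1 a2 a3 a4 l1 l2 j s) := by
    intro j; unfold C1; exact Continuous.measurable (by fun_prop)
  have hmS : ∀ j : ℕ, Measurable (fun s : Sphere2 => spow (C1 a1 a2 a3 a4 l1 l2 j s) p) := by
    intro j
    unfold spow
    exact ((Real.continuous_rpow_const hp).measurable.comp (hmC j).abs).mul
      (measurable_realSign.comp (hmC j))
  -- integrability
  have hbF1 : ∀ (j : ℕ) (s : Sphere2),
      ‖A1 a1 a2 a3 a4 l1 l2 j s * spow (C1 a1 a2 a3 a4 l1 l2 j s) p‖ ≤ KA * KC ^ p * |l1| ^ j := by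
    intro j s
    rw [Real.norm_eq_abs, abs_mul]
    calc |A1 a1 a2 a3 a4 l1 l2 j s| * |spow (C1 a1 a2 a3 a4 l1 l2 j s) p|
        ≤ (KA * |l1| ^ j) * KC ^ p :=
          mul_le_mul (hA j s) (hS j s) (abs_nonneg _)
            (mul_nonneg hKAnn (pow_nonneg (abs_nonneg _) _))
      _ = KA * KC ^ p * |l1| ^ j := by ring
  have hbF2 : ∀ (j : ℕ) (s : Sphere2),
      ‖B1 a1 a2 a3 a4 l1 l2 j s * spow (C1 a1 a2 a3 a4 l1 l2 j s) p‖ ≤ KB * KC ^ p * |l2| ^ j := by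
    intro j s
    rw [Real.norm_eq_abs, abs_mul]
    calc |B1 a1 a2 a3 a4 l1 l2 j s| * |spow (C1 a1 a2 a3 a4 l1 l2 j s) p|
        ≤ (KB * |l2| ^ j) * KC ^ p :=
          mul_le_mul (hB j s) (hS j s) (abs_nonneg _)
            (mul_nonneg hKBnn (pow_nonneg (abs_nonneg _) _))
      _ = KB * KC ^ p * |l2| ^ j := by ring
  have hi1 : ∀ j : ℕ,
      Integrable (fun s => A1 a1 a2 a3 a4 l1 l2 j s * spow (C1 a1 a2 a3 a4 l1 l2 j s) p) Γ := by
    intro j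
    exact Integrable.mono' (integrable_const (KA * KC ^ p * |l1| ^ j))
      ((hmA j).mul (hmS j)).aestronglyMeasurable (ae_of_all _ (hbF1 j))
  have hi2 : ∀ j : ℕ,
      Integrable (fun s => B1 a1 a2 a3 a4 l1 l2 j s * spow (C1 a1 a2 a3 a4 l1 l2 j s) p) Γ := by
    intro j
    exact Integrable.mono' (integrable_const (KB * KC ^ p * |l2| ^ j))
      ((hmB j).mul (hmS j)).aestronglyMeasurable (ae_of_all _ (hbF2 j))
  -- summability
  have hs1 : Summable (fun j : ℕ =>
      ∫ s, A1 a1 a2 a3 a4 l1 l2 j s * spow (C1 a1 a2 a3 a4 l1 l2 j s) p ∂Γ) := by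
    apply Summable.of_norm_bounded
      (g := fun j : ℕ => KA * KC ^ p * (Γ Set.univ).toReal * |l1| ^ j)
      (((summable_geometric_of_lt_one (abs_nonneg _) habs1)).mul_left _)
    intro j
    calc ‖∫ s, A1 a1 a2 a3 a4 l1 l2 j s * spow (C1 a1 a2 a3 a4 l1 l2 j s) p ∂Γ‖
        ≤ KA * KC ^ p * |l1| ^ j * (Γ Set.univ).toReal :=
          norm_integral_le_of_norm_le_const (ae_of_all _ (hbF1 j))
      _ = KA * KC ^ p * (Γ Set.univ).toReal * |l1| ^ j := by ring
  have hs2 : Summable (fun j : ℕ =>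
      ∫ s, B1 a1 a2 a3 a4 l1 l2 j s * spow (C1 a1 a2 a3 a4 l1 l2 j s) p ∂Γ) := by
    apply Summable.of_norm_bounded
      (g := fun j : ℕ => KB * KC ^ p * (Γ Set.univ).toReal * |l2| ^ j)
      (((summable_geometric_of_lt_one (abs_nonneg _) habs2)).mul_left _)
    intro j
    calc ‖∫ s, B1 a1 a2 a3 a4 l1 l2 j s * spow (C1 a1 a2 a3 a4 l1 l2 j s) p ∂Γ‖
        ≤ KB * KC ^ p * |l2| ^ j * (Γ Set.univ).toReal :=
          norm_integral_le_of_norm_le_const (ae_of_all _ (hbF2 j))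
      _ = KB * KC ^ p * (Γ Set.univ).toReal * |l2| ^ j := by ring
  -- the key exact identity
  have key : ∀ h : ℕ, CVneg Γ α a1 a2 a3 a4 l1 l2 h
      = D1 Γ α a1 a2 a3 a4 l1 l2 * l1 ^ h + D2 Γ α a1 a2 a3 a4 l1 l2 * l2 ^ h := by
    intro h
    unfold CVneg D1 D2
    rw [← hp_def]
    have step : ∀ j : ℕ,
        (∫ s, spow (C1 a1 a2 a3 a4 l1 l2 j s) p
          * (l1 ^ h * A1 a1 a2 a3 a4 l1 l2 j s + l2 ^ h * B1 a1 a2 a3 a4 l1 l2 j s) ∂Γ)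
        = l1 ^ h * ∫ s, A1 a1 a2 a3 a4 l1 l2 j s * spow (C1 a1 a2 a3 a4 l1 l2 j s) p ∂Γ
          + l2 ^ h * ∫ s, B1 a1 a2 a3 a4 l1 l2 j s * spow (C1 a1 a2 a3 a4 l1 l2 j s) p ∂Γ := by
      intro j
      rw [← integral_const_mul, ← integral_const_mul,
        ← integral_add ((hi1 j).const_mul _) ((hi2 j).const_mul _)]
      exact integral_congr_ae (ae_of_all _ fun s => by ring)
    calc (∑' j : ℕ, ∫ s, spow (C1 a1 a2 a3 a4 l1 l2 j s) p
            * (l1 ^ h * A1 a1 a2 a3 a4 l1 l2 j s + l2 ^ h * B1 a1 a2 a3 a4 l1 l2 j s) ∂Γ)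
        = ∑' j : ℕ,
            (l1 ^ h * ∫ s, A1 a1 a2 a3 a4 l1 l2 j s * spow (C1 a1 a2 a3 a4 l1 l2 j s) p ∂Γ
            + l2 ^ h * ∫ s, B1 a1 a2 a3 a4 l1 l2 j s * spow (C1 a1 a2 a3 a4 l1 l2 j s) p ∂Γ) :=
          tsum_congr step
      _ = (∑' j : ℕ, l1 ^ h * ∫ s, A1 a1 a2 a3 a4 l1 l2 j s * spow (C1 a1 a2 a3 a4 l1 l2 j s) p ∂Γ)
          + ∑' j : ℕ, l2 ^ h * ∫ s, B1 a1 a2 a3 a4 l1 l2 j s * spow (C1 a1 a2 a3 a4 l1 l2 j s) p ∂Γ :=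
          Summable.tsum_add (hs1.mul_left _) (hs2.mul_left _)
      _ = (∑' j : ℕ, ∫ s, A1 a1 a2 a3 a4 l1 l2 j s * spow (C1 a1 a2 a3 a4 l1 l2 j s) p ∂Γ) * l1 ^ h
          + (∑' j : ℕ, ∫ s, B1 a1 a2 a3 a4 l1 l2 j s * spow (C1 a1 a2 a3 a4 l1 l2 j s) p ∂Γ) * l2 ^ h := by
          rw [tsum_mul_left, tsum_mul_left]; ring
  refine ⟨key, ?_, ?_, ?_⟩
  · intro hlt
    have hl1pos : 0 < |l1| := (abs_nonneg l2).trans_lt hlt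
    have hl1ne : l1 ≠ 0 := by
      intro h0; rw [h0, abs_zero] at hl1pos; exact lt_irrefl 0 hl1pos
    have hr : |l2 / l1| < 1 := by
      rw [abs_div]; exact (div_lt_one hl1pos).mpr hlt
    have heq : ∀ h : ℕ, CVneg Γ α a1 a2 a3 a4 l1 l2 h / l1 ^ h
        = D1 Γ α a1 a2 a3 a4 l1 l2 + D2 Γ α a1 a2 a3 a4 l1 l2 * (l2 / l1) ^ h := by
      intro h
      rw [key h, div_pow]
      field_simp
    have hT : Tendsto (fun h : ℕ => D1 Γ α a1 a2 a3 a4 l1 l2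
        + D2 Γ α a1 a2 a3 a4 l1 l2 * (l2 / l1) ^ h) atTop
        (𝓝 (D1 Γ α a1 a2 a3 a4 l1 l2 + D2 Γ α a1 a2 a3 a4 l1 l2 * 0)) :=
      tendsto_const_nhds.add ((tendsto_pow_atTop_nhds_zero_of_abs_lt_one hr).const_mul _)
    rw [mul_zero, add_zero] at hT
    exact hT.congr fun h => (heq h).symm
  · intro hlt
    have hl2pos : 0 < |l2| := (abs_nonneg l1).trans_lt hlt
    have hl2ne : l2 ≠ 0 := by
      intro h0; rw [h0, abs_zero] at hl2pos; exact lt_irrefl 0 hl2pos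
    have hr : |l1 / l2| < 1 := by
      rw [abs_div]; exact (div_lt_one hl2pos).mpr hlt
    have heq : ∀ h : ℕ, CVneg Γ α a1 a2 a3 a4 l1 l2 h / l2 ^ h
        = D2 Γ α a1 a2 a3 a4 l1 l2 + D1 Γ α a1 a2 a3 a4 l1 l2 * (l1 / l2) ^ h := by
      intro h
      rw [key h, div_pow]
      field_simp
      ring
    have hT : Tendsto (fun h : ℕ => D2 Γ α a1 a2 a3 a4 l1 l2
        + D1 Γ α a1 a2 a3 a4 l1 l2 * (l1 / l2) ^ h) atTop
        (𝓝 (D2 Γ α a1 a2 a3 a4 l1 l2 + D1 Γ α a1 a2 a3 a4 l1 l2 * 0)) :=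
      tendsto_const_nhds.add ((tendsto_pow_atTop_nhds_zero_of_abs_lt_one hr).const_mul _)
    rw [mul_zero, add_zero] at hT
    exact hT.congr fun h => (heq h).symm
  · intro hEq h
    constructor
    · intro hev
      rw [key h, hEq, Even.neg_pow hev]
      ring
    · intro hodd
      rw [key h, hEq, Odd.neg_pow hodd]
      ring
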